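/- arXiv:2010.11740 — 2 statements merged into one kernel-verified Lean document; each statement's English description precedes it below -/
import Mathlib

section
/- Let α be a nonempty type, ι a finite type, σ > 0, and e : α → ι → ℝ a family of residual maps. Then the infimum over x ∈ α of Σᵢ σ²·(1 − exp(−(e x i)²/(2σ²))) equals the infimum over all pairs (x, s) with x ∈ α and s : ι → ℝ satisfying s i > 0 for all i, of Σᵢ [ (e x i)²·(s i)/2 + σ²·((s i)·log(s i) − s i + 1) ]. That is, minimizing the correntropy-based cost is equivalent to minimizing the half-quadratic augmented cost over the enlarged parameter space. -/
/-! The Welsch loss is the minimum over `s > 0` of the half-quadratic cost `e² s / 2 + φ_σ(s)`,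
attained at `s = G_σ(e)`: by Gibbs' inequality `s log t ≤ s log s − s + t` with `t = G_σ(e)`,
whose logarithm is `−e²/(2σ²)`. Minimizing first over `s` and then over `x` gives the theorem. -/

open Finset Real

/-- Gaussian kernel `G_σ(e) = exp(−e²/(2σ²))`. -/
noncomputable def gaussKernel (σ e : ℝ) : ℝ := Real.exp (-(e ^ 2) / (2 * σ ^ 2))

theorem csInf_range_eq_csInf_of_le_of_exists_eq {α β γ : Type*} [Nonempty α]
    [ConditionallyCompleteLattice γ] {p : β → Prop} {f : α → γ} {g : α → β → γ}
    (hf : BddBelow (Set.range f)) (hle : ∀ x b, p b → f x ≤ g x b)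
    (hattain : ∀ x, ∃ b, p b ∧ g x b = f x) :
    sInf (Set.range f) = sInf {v | ∃ x b, p b ∧ v = g x b} := by
  obtain ⟨x₀⟩ := ‹Nonempty α›
  have hmem : ∀ x, f x ∈ {v | ∃ x b, p b ∧ v = g x b} := fun x => by
    obtain ⟨b, hb, hgb⟩ := hattain x
    exact ⟨x, b, hb, hgb.symm⟩
  have hg : BddBelow {v | ∃ x b, p b ∧ v = g x b} := by
    obtain ⟨m, hm⟩ := hf
    refine ⟨m, ?_⟩
    rintro v ⟨x, b, hb, rfl⟩
    exact (hm ⟨x, rfl⟩).trans (hle x b hb)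
  apply le_antisymm
  · refine le_csInf ⟨_, hmem x₀⟩ ?_
    rintro v ⟨x, b, hb, rfl⟩
    exact (csInf_le hf ⟨x, rfl⟩).trans (hle x b hb)
  · refine le_csInf (Set.range_nonempty f) ?_
    rintro v ⟨x, rfl⟩
    exact csInf_le hg (hmem x)

theorem mul_log_le_mul_log_sub_add {s t : ℝ} (hs : 0 < s) (ht : 0 < t) :
    s * log t ≤ s * log s - s + t := by
  have h := log_le_sub_one_of_pos (div_pos ht hs)
  rw [log_div ht.ne' hs.ne', le_sub_iff_add_le, le_div_iff₀ hs] at h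
  linarith

noncomputable def welschLoss (σ e : ℝ) : ℝ := σ ^ 2 * (1 - gaussKernel σ e)

noncomputable def hqCost (σ e s : ℝ) : ℝ := e ^ 2 * s / 2 + σ ^ 2 * (s * log s - s + 1)

section Gaussian

variable {σ : ℝ} (e : ℝ)

theorem gaussKernel_pos : 0 < gaussKernel σ e := exp_pos _

theorem gaussKernel_le_one : gaussKernel σ e ≤ 1 :=
  exp_le_one_iff.mpr (div_nonpos_of_nonpos_of_nonneg (neg_nonpos.mpr (sq_nonneg e)) (by positivity))

theorem sq_mul_log_gaussKernel (hσ : σ ≠ 0) : σ ^ 2 * log (gaussKernel σ e) = -(e ^ 2) / 2 := by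
  rw [gaussKernel, log_exp]
  field_simp

theorem welschLoss_nonneg : 0 ≤ welschLoss σ e :=
  mul_nonneg (sq_nonneg σ) (sub_nonneg.mpr (gaussKernel_le_one e))

theorem welschLoss_le_hqCost (hσ : σ ≠ 0) {s : ℝ} (hs : 0 < s) :
    welschLoss σ e ≤ hqCost σ e s := by
  have hgibbs := mul_le_mul_of_nonneg_left
    (mul_log_le_mul_log_sub_add hs (gaussKernel_pos (σ := σ) e)) (sq_nonneg σ)
  have hlog := sq_mul_log_gaussKernel e hσ
  rw [welschLoss, hqCost]
  linear_combination hgibbs - s * hlog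

theorem hqCost_gaussKernel (hσ : σ ≠ 0) : hqCost σ e (gaussKernel σ e) = welschLoss σ e := by
  have hlog := sq_mul_log_gaussKernel e hσ
  rw [welschLoss, hqCost]
  linear_combination gaussKernel σ e * hlog

end Gaussian

/-- Minimizing the correntropy-based cost is equivalent to minimizing the
half-quadratic augmented cost over the enlarged parameter space `(x, s)`. -/
theorem hq_inf_equivalence {α : Type*} [Nonempty α] {ι : Type*} [Fintype ι]
    (σ : ℝ) (hσ : 0 < σ) (e : α → ι → ℝ) :
    sInf (Set.range fun x : α => ∑ i, σ ^ 2 * (1 - gaussKernel σ (e x i))) =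
      sInf {v : ℝ | ∃ (x : α) (s : ι → ℝ), (∀ i, 0 < s i) ∧
        v = ∑ i, ((e x i) ^ 2 * (s i) / 2 +
          σ ^ 2 * ((s i) * Real.log (s i) - s i + 1))} := by
  refine csInf_range_eq_csInf_of_le_of_exists_eq (p := fun s : ι → ℝ => ∀ i, 0 < s i)
    (f := fun x => ∑ i, welschLoss σ (e x i)) (g := fun x s => ∑ i, hqCost σ (e x i) (s i))
    ?_ ?_ ?_
  · exact ⟨0, by rintro _ ⟨x, rfl⟩; exact sum_nonneg fun i _ => welschLoss_nonneg _⟩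
  · exact fun x s hs => sum_le_sum fun i _ => welschLoss_le_hqCost _ hσ.ne' (hs i)
  · exact fun x => ⟨fun i => gaussKernel σ (e x i), fun i => gaussKernel_pos _,
      sum_congr rfl fun i _ => hqCost_gaussKernel _ hσ.ne'⟩
end

section
/- Let Q be a real-entried matrix of size m × n (viewed in ℂ), and let M : Matrix (Fin m) (Fin n) ℂ, U : Matrix (Fin m) (Fin r) ℂ, Y : Matrix (Fin r) (Fin n) ℂ. Define the gradient g = −((Q ∘ Q) ∘ (M − U ⬝ Y)) ⬝ Yᴴ, where ∘ is entrywise (Hadamard) multiplication. Let d : Matrix (Fin m) (Fin r) ℂ be any descent direction with ‖Q ∘ (d ⬝ Y)‖_F ≠ 0, set γ = Re⟨g, d⟩_F and μ = γ / ‖Q ∘ (d ⬝ Y)‖_F². Then the exact line-search decrease identity holds: (1/2)‖Q ∘ (M − (U − μ • d) ⬝ Y)‖_F² = (1/2)‖Q ∘ (M − U ⬝ Y)‖_F² − γ² / (2‖Q ∘ (d ⬝ Y)‖_F²). -/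
/-!
With `R = Q ⊙ (M - U * Y)` and `S = Q ⊙ (d * Y)`, the new residual is `R + μ • S`, so its squared
norm is the real quadratic `‖R‖² + 2μ Re⟨R, S⟩ + μ²‖S‖²`. Because `Q` is real, `g` is the adjoint
of `d ↦ Q ⊙ (d * Y)` applied to `-R`, so `Re⟨R, S⟩ = -γ`; the step `μ = γ / ‖S‖²` is the minimiser
of that quadratic and the minimum value is `‖R‖² - γ² / ‖S‖²`.
-/

open Finset Matrix

/-- Frobenius norm of a complex matrix. -/
noncomputable def frobNorm {m n : Type*} [Fintype m] [Fintype n]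
    (A : Matrix m n ℂ) : ℝ :=
  Real.sqrt (∑ i, ∑ j, ‖A i j‖ ^ 2)

/-- Frobenius inner product of complex matrices. -/
noncomputable def frobInner {m n : Type*} [Fintype m] [Fintype n]
    (A B : Matrix m n ℂ) : ℂ :=
  ∑ i, ∑ j, starRingEnd ℂ (A i j) * B i j

lemma map_conj_eq_self_of_im_eq_zero {m n : Type*} {P : Matrix m n ℂ}
    (hP : ∀ i j, (P i j).im = 0) : P.map (starRingEnd ℂ) = P :=
  ext fun i j => Complex.conj_eq_iff_im.mpr (hP i j)

section Frobenius

variable {k m n : Type*} [Fintype k] [Fintype m] [Fintype n]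

lemma frobNorm_sq (A : Matrix m n ℂ) :
    frobNorm A ^ 2 = ∑ i, ∑ j, Complex.normSq (A i j) := by
  rw [frobNorm, Real.sq_sqrt (by positivity)]
  simp [Complex.sq_norm]

lemma re_frobInner (A B : Matrix m n ℂ) :
    (frobInner A B).re = ∑ i, ∑ j, (starRingEnd ℂ (A i j) * B i j).re := by
  simp only [frobInner, Complex.re_sum]

lemma frobInner_neg_left (A B : Matrix m n ℂ) : frobInner (-A) B = -frobInner A B := by
  simp [frobInner]

lemma frobInner_mul_conjTranspose_left (A : Matrix m n ℂ) (B : Matrix k n ℂ)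
    (D : Matrix m k ℂ) : frobInner (A * Bᴴ) D = frobInner A (D * B) := by
  simp only [frobInner, mul_apply, conjTranspose_apply, map_sum, _root_.map_mul,
    Complex.star_def, Complex.conj_conj, Finset.sum_mul, Finset.mul_sum]
  refine Finset.sum_congr rfl fun i _ => ?_
  rw [Finset.sum_comm]
  exact Finset.sum_congr rfl fun j _ => Finset.sum_congr rfl fun l _ => by ring

lemma frobInner_hadamard_left (P A B : Matrix m n ℂ) :
    frobInner (P ⊙ A) B = frobInner A (P.map (starRingEnd ℂ) ⊙ B) := by
  simp only [frobInner, hadamard_apply, map_apply, _root_.map_mul]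
  exact Finset.sum_congr rfl fun i _ => Finset.sum_congr rfl fun j _ => by ring

lemma frobNorm_add_real_smul_sq (A B : Matrix m n ℂ) (t : ℝ) :
    frobNorm (A + (t : ℂ) • B) ^ 2
      = frobNorm A ^ 2 + 2 * t * (frobInner A B).re + t ^ 2 * frobNorm B ^ 2 := by
  have hpoint : ∀ z w : ℂ, Complex.normSq (z + t * w)
      = Complex.normSq z + 2 * t * (starRingEnd ℂ z * w).re + t ^ 2 * Complex.normSq w := by
    intro z w
    simp only [Complex.normSq_apply, Complex.add_re, Complex.add_im, Complex.mul_re,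
      Complex.mul_im, Complex.ofReal_re, Complex.ofReal_im, Complex.conj_re, Complex.conj_im]
    ring
  simp only [frobNorm_sq, re_frobInner, Matrix.add_apply, Matrix.smul_apply, smul_eq_mul, hpoint,
    Finset.sum_add_distrib, Finset.mul_sum]

end Frobenius

/-- Exact line-search decrease identity for the gradient step in `U`. -/
theorem exact_linesearch_U {m n r : ℕ}
    (Q : Matrix (Fin m) (Fin n) ℂ) (hQ : ∀ i j, (Q i j).im = 0)
    (M : Matrix (Fin m) (Fin n) ℂ) (U : Matrix (Fin m) (Fin r) ℂ)
    (Y : Matrix (Fin r) (Fin n) ℂ)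
    (g : Matrix (Fin m) (Fin r) ℂ)
    (hg : g = -(((Q ⊙ Q) ⊙ (M - U * Y)) * Yᴴ))
    (d : Matrix (Fin m) (Fin r) ℂ)
    (hd : frobNorm (Q ⊙ (d * Y)) ≠ 0)
    (γ : ℝ) (hγ : γ = (frobInner g d).re)
    (μ : ℝ) (hμ : μ = γ / frobNorm (Q ⊙ (d * Y)) ^ 2) :
    (1 / 2) * frobNorm (Q ⊙ (M - (U - (μ : ℂ) • d) * Y)) ^ 2 =
      (1 / 2) * frobNorm (Q ⊙ (M - U * Y)) ^ 2 -
        γ ^ 2 / (2 * frobNorm (Q ⊙ (d * Y)) ^ 2) := by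
  set R := Q ⊙ (M - U * Y)
  set S := Q ⊙ (d * Y)
  have hgrad : frobInner g d = -frobInner R S := by
    rw [hg, frobInner_neg_left, frobInner_mul_conjTranspose_left, hadamard_assoc,
      frobInner_hadamard_left, map_conj_eq_self_of_im_eq_zero hQ]
  have hstep : Q ⊙ (M - (U - (μ : ℂ) • d) * Y) = R + (μ : ℂ) • S := by
    rw [Matrix.sub_mul, Matrix.smul_mul, ← hadamard_smul, ← hadamard_add]
    congr 1
    abel
  have hS : frobNorm S ^ 2 ≠ 0 := pow_ne_zero 2 hd
  rw [hstep, frobNorm_add_real_smul_sq, ← neg_neg (frobInner R S), ← hgrad, Complex.neg_re,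
    ← hγ, hμ]
  field_simp
  ring
end
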